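/- Let P(q) = Σ_{k=0}^{n−1} a_k q^k be a polynomial of degree at most n−1 with integer coefficients. Then P is even modulo n (i.e., gcd(i,n) = gcd(j,n) implies a_i = a_j) if and only if for every divisor d of n the residue of P modulo the d-th cyclotomic polynomial Φ_d is a constant r_d ∈ ℤ. In that case, a_k = (1/n) Σ_{d|n} c(k,d)·r_d and r_d = Σ_{t|n} c(n/d, t)·a_{n/t}. -/

import Mathlib

/-
Evaluate `P` at the `n`-th roots of unity. Modulo `Φ_d` the residue of `P` has degree `< φ(d)`,
so it is a constant exactly when `P` takes a single value on the `φ(d)` primitive `d`-th roots,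
and that value is then `r_d`. Discrete Fourier inversion over the `n`-th roots of unity, grouped
by their order `d`, gives `n a_k = ∑_{d ∣ n} c(k,d) r_d`; for even `a`, grouping the exponents `k`
by `gcd(k,n)` gives `P(ζ^e) = ∑_{u ∣ n} c(e,u) a_{n/u}` for a primitive `n`-th root `ζ`. Both
directions of the equivalence then come down to `c(k,d)` depending only on `gcd(k,d)`: if
`gcd(i,d) = gcd(j,d)` then `i ≡ s j (mod d)` for some `s` prime to `d`, and `w ↦ w ^ s` permutes
the primitive `d`-th roots.
-/

noncomputable section

/-- The Ramanujan (Von Sterneck) sum `c(k,d)`: the sum of the `k`-th powers of the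
primitive `d`-th roots of unity (in `ℂ`). -/
def ramanujanC (k d : ℕ) : ℂ := ∑ z ∈ primitiveRoots d ℂ, z ^ k

/-- The polynomial `P(q) = ∑_{k=0}^{n-1} a_k q^k` with integer coefficients. -/
def evenPoly (n : ℕ) (a : ℕ → ℤ) : Polynomial ℤ :=
  ∑ k ∈ Finset.range n, Polynomial.C (a k) * Polynomial.X ^ k

/-- `P` is even modulo `n`: `gcd(i,n) = gcd(j,n)` implies `a_i = a_j`. -/
def IsEvenMod (n : ℕ) (a : ℕ → ℤ) : Prop :=
  ∀ i < n, ∀ j < n, Nat.gcd i n = Nat.gcd j n → a i = a j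

open Finset Polynomial

theorem Nat.exists_coprime_modEq_mul_of_gcd_eq {i j d : ℕ} (h : i.gcd d = j.gcd d) :
    ∃ s, s.Coprime d ∧ i ≡ s * j [MOD d] := by
  rcases Nat.eq_zero_or_pos d with rfl | hd
  · exact ⟨1, Nat.coprime_one_left 0, by simp_all [Nat.ModEq.refl]⟩
  obtain ⟨i', d', hid, hi, hdi⟩ := Nat.exists_coprime i d
  obtain ⟨j', d'', hjd, hj, hdj⟩ := Nat.exists_coprime j d
  have hg : 0 < j.gcd d := Nat.gcd_pos_of_pos_right j hd
  rw [← h] at hj hdj hg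
  obtain rfl : d' = d'' := Nat.eq_of_mul_eq_mul_right hg (hdi.symm.trans hdj)
  have : NeZero d := ⟨hd.ne'⟩
  have hdvd : d' ∣ d := ⟨_, hdi⟩
  obtain ⟨v, hv⟩ := ZMod.unitsMap_surjective hdvd
    (ZMod.unitOfCoprime i' hid * (ZMod.unitOfCoprime j' hjd)⁻¹)
  refine ⟨(v : ZMod d).val, ZMod.val_coe_unit_coprime v, ?_⟩
  have hmod : i' ≡ (v : ZMod d).val * j' [MOD d'] := by
    rw [← ZMod.natCast_eq_natCast_iff, Nat.cast_mul, ZMod.natCast_val, ← ZMod.unitsMap_val hdvd, hv,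
      Units.val_mul, mul_assoc, ← ZMod.coe_unitOfCoprime j' hjd, Units.inv_mul, mul_one,
      ZMod.coe_unitOfCoprime]
  have := hmod.mul_right' (i.gcd d)
  rwa [← hdi, ← hi, mul_assoc, ← hj] at this

theorem ramanujanC_eq_of_gcd_eq {i j d n : ℕ} (hd : d ∣ n) (h : i.gcd n = j.gcd n) :
    ramanujanC i d = ramanujanC j d := by
  have hgcd : i.gcd d = j.gcd d := by
    rw [← Nat.gcd_eq_right hd, ← Nat.gcd_assoc, ← Nat.gcd_assoc, h]
  rcases Nat.eq_zero_or_pos d with rfl | hd0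
  · simp [ramanujanC]
  have : NeZero d := ⟨hd0.ne'⟩
  obtain ⟨s, hs, hmod⟩ := Nat.exists_coprime_modEq_mul_of_gcd_eq hgcd
  rw [ramanujanC, ramanujanC, ← sum_coe_sort, ← sum_coe_sort (primitiveRoots d ℂ)]
  refine Fintype.sum_equiv (IsPrimitiveRoot.primitiveRootsPowEquivOfCoprime hs) _ _ fun w => ?_
  rw [IsPrimitiveRoot.primitiveRootsPowEquivOfCoprime_apply_coe, ← pow_mul,
    pow_eq_pow_of_modEq hmod ((mem_primitiveRoots hd0).1 w.2).pow_eq_one]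

section RootsOfUnity

variable {M : Type*} [CommMonoid M] {ζ : M} {n : ℕ}

theorem IsPrimitiveRoot.orderOf_pow_mem_divisors (hζ : IsPrimitiveRoot ζ n) (hn : n ≠ 0)
    (m : ℕ) : orderOf (ζ ^ m) ∈ n.divisors := by
  refine Nat.mem_divisors.2 ⟨orderOf_dvd_of_pow_eq_one ?_, hn⟩
  rw [pow_right_comm, hζ.pow_eq_one, one_pow]

theorem IsPrimitiveRoot.gcd_eq_div_orderOf_pow (hζ : IsPrimitiveRoot ζ n) (hn : n ≠ 0) (m : ℕ) :
    m.gcd n = n / orderOf (ζ ^ m) := by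
  rw [IsOfFinOrder.orderOf_pow _ _ (hζ.isOfFinOrder hn), ← hζ.eq_orderOf,
    Nat.div_div_self (Nat.gcd_dvd_left n m) hn, Nat.gcd_comm]

end RootsOfUnity

section Orthogonality

variable {K : Type*} [Field K] {ζ : K} {n : ℕ}

theorem IsPrimitiveRoot.sum_range_pow_mul_inv_pow (hζ : IsPrimitiveRoot ζ n) {k i : ℕ}
    (hk : k < n) (hi : i < n) :
    ∑ m ∈ range n, (ζ ^ m) ^ k * (ζ⁻¹ ^ m) ^ i = if k = i then (n : K) else 0 := by
  have hζ0 : ζ ≠ 0 := hζ.ne_zero (by omega)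
  have hpow : ∀ m, (ζ ^ m) ^ k * (ζ⁻¹ ^ m) ^ i = (ζ ^ k * ζ⁻¹ ^ i) ^ m := fun m => by ring
  simp_rw [hpow]
  split_ifs with hki
  · simp [hki, mul_inv_cancel₀ (pow_ne_zero i hζ0)]
  · have hne : ζ ^ k * ζ⁻¹ ^ i ≠ 1 := fun h => by
      rw [inv_pow, mul_inv_eq_one₀ (pow_ne_zero _ hζ0)] at h
      exact hki (hζ.pow_inj hk hi h)
    have hn1 : (ζ ^ k * ζ⁻¹ ^ i) ^ n = 1 := by
      rw [show (ζ ^ k * ζ⁻¹ ^ i) ^ n = (ζ ^ n) ^ k * (ζ ^ n)⁻¹ ^ i by ring, hζ.pow_eq_one]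
      simp
    rw [geom_sum_eq hne, hn1, sub_self, zero_div]

theorem IsPrimitiveRoot.sum_range_mul_inv_pow (hζ : IsPrimitiveRoot ζ n) (b : ℕ → K) {i : ℕ}
    (hi : i < n) :
    ∑ m ∈ range n, (∑ k ∈ range n, b k * (ζ ^ m) ^ k) * (ζ⁻¹ ^ m) ^ i = n * b i :=
  calc ∑ m ∈ range n, (∑ k ∈ range n, b k * (ζ ^ m) ^ k) * (ζ⁻¹ ^ m) ^ i
      = ∑ k ∈ range n, b k * ∑ m ∈ range n, (ζ ^ m) ^ k * (ζ⁻¹ ^ m) ^ i := by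
        simp_rw [sum_mul, mul_sum, mul_assoc]
        exact sum_comm
    _ = ∑ k ∈ range n, b k * if k = i then (n : K) else 0 :=
        sum_congr rfl fun k hk => by rw [hζ.sum_range_pow_mul_inv_pow (mem_range.1 hk) hi]
    _ = n * b i := by simp [hi, mul_comm]

end Orthogonality

section RamanujanSum

variable {ζ : ℂ} {n : ℕ}

theorem IsPrimitiveRoot.sum_filter_orderOf_pow_eq_ramanujanC (hζ : IsPrimitiveRoot ζ n) {d : ℕ}
    (hd : d ∈ n.divisors) (e : ℕ) :
    ∑ m ∈ range n with orderOf (ζ ^ m) = d, (ζ ^ m) ^ e = ramanujanC e d := by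
  have hd0 : 0 < d := Nat.pos_of_mem_divisors hd
  have : NeZero n := ⟨(Nat.mem_divisors.1 hd).2⟩
  refine sum_nbij (ζ ^ ·) ?_ ?_ ?_ fun _ _ => rfl
  · intro m hm
    rw [mem_filter] at hm
    exact (mem_primitiveRoots hd0).2 (hm.2 ▸ IsPrimitiveRoot.orderOf _)
  · intro m₁ h₁ m₂ h₂ h
    exact hζ.pow_inj (mem_range.1 (mem_filter.1 h₁).1) (mem_range.1 (mem_filter.1 h₂).1) h
  · intro w hw
    have hw' := (mem_primitiveRoots hd0).1 hw
    obtain ⟨k, hdk⟩ := (Nat.mem_divisors.1 hd).1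
    obtain ⟨m, hm, rfl⟩ := hζ.eq_pow_of_pow_eq_one (by rw [hdk, pow_mul, hw'.pow_eq_one, one_pow])
    exact ⟨m, mem_filter.2 ⟨mem_range.2 hm, hw'.eq_orderOf.symm⟩, rfl⟩

theorem IsPrimitiveRoot.sum_range_orderOf_pow_eq_sum_divisors (hζ : IsPrimitiveRoot ζ n)
    (g : ℕ → ℂ) (e : ℕ) :
    ∑ m ∈ range n, g (orderOf (ζ ^ m)) * (ζ ^ m) ^ e = ∑ d ∈ n.divisors, ramanujanC e d * g d := by
  rw [← sum_fiberwise_of_maps_to (g := fun m => orderOf (ζ ^ m)) (t := n.divisors)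
    fun m hm => hζ.orderOf_pow_mem_divisors (Nat.ne_zero_of_lt (mem_range.1 hm)) m]
  refine sum_congr rfl fun d hd => ?_
  rw [sum_congr rfl fun m hm => by rw [(mem_filter.1 hm).2], ← mul_sum,
    hζ.sum_filter_orderOf_pow_eq_ramanujanC hd, mul_comm]

end RamanujanSum

section Residues

theorem aeval_evenPoly {A : Type*} [CommRing A] (n : ℕ) (a : ℕ → ℤ) (w : A) :
    aeval w (evenPoly n a) = ∑ k ∈ range n, (a k : A) * w ^ k := by
  simp [evenPoly]

theorem IsPrimitiveRoot.aeval_cyclotomic {R : Type*} [CommRing R] [IsDomain R] {w : R} {d : ℕ}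
    (hw : IsPrimitiveRoot w d) (hd : 0 < d) : aeval w (cyclotomic d ℤ) = 0 := by
  rw [← eval_map_algebraMap, map_cyclotomic]
  exact hw.isRoot_cyclotomic hd

theorem aeval_eq_of_modByMonic_cyclotomic_eq_C {R : Type*} [CommRing R] [IsDomain R] {p : ℤ[X]}
    {d : ℕ} {r : ℤ} (h : p %ₘ cyclotomic d ℤ = C r) {w : R} (hw : IsPrimitiveRoot w d)
    (hd : 0 < d) : aeval w p = r := by
  rw [← aeval_modByMonic_eq_self_of_root (hw.aeval_cyclotomic hd), h, aeval_C, algebraMap_int_eq,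
    eq_intCast]

theorem exists_modByMonic_cyclotomic_eq_C {p : ℤ[X]} {d : ℕ} (hd : 0 < d) {v : ℂ}
    (h : ∀ w ∈ primitiveRoots d ℂ, aeval w p = v) : ∃ r : ℤ, p %ₘ cyclotomic d ℤ = C r := by
  set q := p %ₘ cyclotomic d ℤ
  have hq : q.map (algebraMap ℤ ℂ) = C v := by
    refine eq_of_degree_sub_lt_of_eval_finset_eq (primitiveRoots d ℂ) ?_ fun w hw => ?_
    · rw [Complex.card_primitiveRoots]
      refine (degree_sub_le _ _).trans_lt (max_lt ?_ (degree_C_le.trans_lt ?_))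
      · rw [← degree_cyclotomic d ℤ]
        exact degree_map_le.trans_lt (degree_modByMonic_lt _ (cyclotomic.monic d ℤ))
      · exact_mod_cast Nat.totient_pos.2 hd
    · rw [eval_C, eval_map_algebraMap,
        aeval_modByMonic_eq_self_of_root (((mem_primitiveRoots hd).1 hw).aeval_cyclotomic hd),
        h w hw]
  refine ⟨q.coeff 0, eq_C_of_natDegree_eq_zero ?_⟩
  rw [← natDegree_map_eq_of_injective (RingHom.injective_int (algebraMap ℤ ℂ)), hq, natDegree_C]

end Residues

section CohenInversion

variable {n : ℕ} {a : ℕ → ℤ}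

theorem IsPrimitiveRoot.aeval_evenPoly_pow_of_isEvenMod {ζ : ℂ} (hζ : IsPrimitiveRoot ζ n)
    (ha : IsEvenMod n a) (e : ℕ) :
    aeval (ζ ^ e) (evenPoly n a) = ∑ u ∈ n.divisors, ramanujanC e u * (a (n / u % n) : ℂ) := by
  rw [aeval_evenPoly, ← hζ.sum_range_orderOf_pow_eq_sum_divisors]
  refine sum_congr rfl fun k hk => ?_
  have hkn : k < n := mem_range.1 hk
  have hgcd := hζ.gcd_eq_div_orderOf_pow (by omega) k
  have hdvd : n / orderOf (ζ ^ k) ∣ n := hgcd ▸ Nat.gcd_dvd_right k n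
  have hgcd' : (n / orderOf (ζ ^ k) % n).gcd n = k.gcd n := by
    rw [← Nat.gcd_rec, Nat.gcd_eq_right hdvd, hgcd]
  rw [pow_right_comm, ha k hkn _ (Nat.mod_lt _ (by omega)) hgcd'.symm]

theorem modByMonic_cyclotomic_eq_C_of_isEvenMod (ha : IsEvenMod n a) {d : ℕ}
    (hd : d ∈ n.divisors) : ∃ r : ℤ, evenPoly n a %ₘ cyclotomic d ℤ = C r := by
  have hd0 : 0 < d := Nat.pos_of_mem_divisors hd
  have hn : n ≠ 0 := (Nat.mem_divisors.1 hd).2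
  have : NeZero n := ⟨hn⟩
  obtain ⟨ζ, hζ⟩ : ∃ ζ : ℂ, IsPrimitiveRoot ζ n := ⟨_, Complex.isPrimitiveRoot_exp n hn⟩
  refine exists_modByMonic_cyclotomic_eq_C hd0
    (v := ∑ u ∈ n.divisors, ramanujanC (n / d) u * (a (n / u % n) : ℂ)) fun w hw => ?_
  have hw' := (mem_primitiveRoots hd0).1 hw
  obtain ⟨k, hdk⟩ := (Nat.mem_divisors.1 hd).1
  obtain ⟨m, -, rfl⟩ := hζ.eq_pow_of_pow_eq_one (by rw [hdk, pow_mul, hw'.pow_eq_one, one_pow])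
  have hgcd : m.gcd n = (n / d).gcd n := by
    rw [hζ.gcd_eq_div_orderOf_pow hn, ← hw'.eq_orderOf,
      Nat.gcd_eq_left (Nat.div_dvd_of_dvd ⟨k, hdk⟩)]
  rw [hζ.aeval_evenPoly_pow_of_isEvenMod ha]
  exact sum_congr rfl fun u hu => by
    rw [ramanujanC_eq_of_gcd_eq (Nat.mem_divisors.1 hu).1 hgcd]

theorem coeff_eq_sum_ramanujanC_mul {r : ℕ → ℤ}
    (hr : ∀ d ∈ n.divisors, evenPoly n a %ₘ cyclotomic d ℤ = C (r d)) {k : ℕ} (hk : k < n) :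
    (a k : ℂ) = 1 / n * ∑ d ∈ n.divisors, ramanujanC k d * r d := by
  have hn : n ≠ 0 := by omega
  obtain ⟨ζ, hζ⟩ : ∃ ζ : ℂ, IsPrimitiveRoot ζ n := ⟨_, Complex.isPrimitiveRoot_exp n hn⟩
  have hval : ∀ m, ∑ j ∈ range n, (a j : ℂ) * (ζ ^ m) ^ j = r (orderOf (ζ⁻¹ ^ m)) := fun m => by
    rw [inv_pow, show orderOf (ζ ^ m)⁻¹ = orderOf (ζ ^ m) by simp [orderOf_eq_orderOf_iff],
      ← aeval_evenPoly]
    have hord := hζ.orderOf_pow_mem_divisors hn m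
    exact aeval_eq_of_modByMonic_cyclotomic_eq_C (hr _ hord) (IsPrimitiveRoot.orderOf _)
      (Nat.pos_of_mem_divisors hord)
  have hinv := hζ.sum_range_mul_inv_pow (fun j => (a j : ℂ)) hk
  simp only [hval] at hinv
  rw [hζ.inv.sum_range_orderOf_pow_eq_sum_divisors (fun d => (r d : ℂ))] at hinv
  rw [hinv]
  field_simp

theorem isEvenMod_of_modByMonic_cyclotomic_eq_C {r : ℕ → ℤ}
    (hr : ∀ d ∈ n.divisors, evenPoly n a %ₘ cyclotomic d ℤ = C (r d)) : IsEvenMod n a := by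
  intro i hi j hj hij
  have h := coeff_eq_sum_ramanujanC_mul hr hi
  rw [sum_congr rfl fun d hd => by rw [ramanujanC_eq_of_gcd_eq (Nat.mem_divisors.1 hd).1 hij],
    ← coeff_eq_sum_ramanujanC_mul hr hj] at h
  exact_mod_cast h

theorem residue_eq_sum_ramanujanC_mul {r : ℕ → ℤ}
    (hr : ∀ d ∈ n.divisors, evenPoly n a %ₘ cyclotomic d ℤ = C (r d)) {d : ℕ}
    (hd : d ∈ n.divisors) :
    (r d : ℂ) = ∑ u ∈ n.divisors, ramanujanC (n / d) u * (a (n / u % n) : ℂ) := by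
  have hn : n ≠ 0 := (Nat.mem_divisors.1 hd).2
  obtain ⟨ζ, hζ⟩ : ∃ ζ : ℂ, IsPrimitiveRoot ζ n := ⟨_, Complex.isPrimitiveRoot_exp n hn⟩
  have hζd : IsPrimitiveRoot (ζ ^ (n / d)) d :=
    hζ.pow (Nat.pos_of_ne_zero hn) (Nat.div_mul_cancel (Nat.mem_divisors.1 hd).1).symm
  rw [← hζ.aeval_evenPoly_pow_of_isEvenMod (isEvenMod_of_modByMonic_cyclotomic_eq_C hr),
    aeval_eq_of_modByMonic_cyclotomic_eq_C (hr d hd) hζd (Nat.pos_of_mem_divisors hd)]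

end CohenInversion

theorem cohen_moebius_inversion_general (n : ℕ) (a : ℕ → ℤ) :
    (IsEvenMod n a ↔
      ∀ d ∈ n.divisors, ∃ r : ℤ,
        evenPoly n a %ₘ Polynomial.cyclotomic d ℤ = Polynomial.C r) ∧
    ∀ r : ℕ → ℤ,
      (∀ d ∈ n.divisors,
          evenPoly n a %ₘ Polynomial.cyclotomic d ℤ = Polynomial.C (r d)) →
      (∀ k < n,
          (a k : ℂ) = (1 / (n : ℂ)) * ∑ d ∈ n.divisors, ramanujanC k d * (r d : ℂ)) ∧
      (∀ d ∈ n.divisors,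
          (r d : ℂ) = ∑ u ∈ n.divisors, ramanujanC (n / d) u * (a (n / u % n) : ℂ)) := by
  refine ⟨⟨fun ha d hd => modByMonic_cyclotomic_eq_C_of_isEvenMod ha hd, fun h => ?_⟩,
    fun r hr => ⟨fun k hk => coeff_eq_sum_ramanujanC_mul hr hk,
      fun d hd => residue_eq_sum_ramanujanC_mul hr hd⟩⟩
  choose! r hr using h
  exact isEvenMod_of_modByMonic_cyclotomic_eq_C hr

/-- **E. Cohen's generalization of Möbius inversion** (Lemma 7.4 of the paper).
Let `P(q) = ∑_{k<n} a_k q^k` have integer coefficients.  Then `P` is even modulo `n`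
iff for every divisor `d` of `n` the residue of `P` modulo the cyclotomic polynomial
`Φ_d` is a constant `r_d ∈ ℤ`; in that case
`a_k = (1/n) ∑_{d ∣ n} c(k,d) r_d` and `r_d = ∑_{t ∣ n} c(n/d, t) a_{n/t (mod n)}`,
where `c(·,·)` is the Ramanujan sum. -/
theorem cohen_moebius_inversion (n : ℕ) (hn : 0 < n) (a : ℕ → ℤ) :
    (IsEvenMod n a ↔
      ∀ d ∈ n.divisors, ∃ r : ℤ,
        evenPoly n a %ₘ Polynomial.cyclotomic d ℤ = Polynomial.C r) ∧
    ∀ r : ℕ → ℤ,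
      (∀ d ∈ n.divisors,
          evenPoly n a %ₘ Polynomial.cyclotomic d ℤ = Polynomial.C (r d)) →
      (∀ k < n,
          (a k : ℂ) = (1 / (n : ℂ)) * ∑ d ∈ n.divisors, ramanujanC k d * (r d : ℂ)) ∧
      (∀ d ∈ n.divisors,
          (r d : ℂ) = ∑ u ∈ n.divisors, ramanujanC (n / d) u * (a (n / u % n) : ℂ)) :=
  cohen_moebius_inversion_general n a
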